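/- arXiv:math/9911080 — 2 statements merged into one kernel-verified Lean document; each statement's English description precedes it below -/
import Mathlib

section
/- Let G be a group with normal subgroups K ⊆ N such that N/K is a nontrivial finitely generated free abelian group, and let ρ : G → T_2 be a homomorphism whose restriction to N has image contained in the unipotent subgroup {[[1,v],[0,1]]} and is nontrivial on N. Then the image of the upper diagonal character ρ_a : G → ℂ* consists of eigenvalues of the integer matrices giving the conjugation action of G/N on a maximal free abelian subgroup ℤ^s of N/K-torsion-free quotient; in particular, if that action has only roots of unity as eigenvalues, then ρ_a is a torsion character. -/
lemma aux_totient : ∀ m : ℕ,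
    ((¬ 2 ∣ m ∨ 4 ∣ m) → m ≤ m.totient ^ 2) ∧ m ≤ 2 * m.totient ^ 2 := by
  intro m
  induction m using Nat.recOnPosPrimePosCoprime with
  | prime_pow p n hpp hn =>
      have hφ : (p ^ n).totient = p ^ (n - 1) * (p - 1) := Nat.totient_prime_pow hpp hn
      rw [hφ]
      rcases eq_or_ne p 2 with rfl | hp2
      · constructor
        · rintro (h2 | h4)
          · exact absurd (dvd_pow_self 2 hn.ne') h2
          · have hn2 : 2 ≤ n := by
              by_contra hlt
              have hn1 : n = 1 := by omega
              rw [hn1] at h4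
              norm_num at h4
            calc 2 ^ n ≤ 2 ^ (2 * (n - 1)) := Nat.pow_le_pow_right (by norm_num) (by omega)
              _ = (2 ^ (n - 1) * (2 - 1)) ^ 2 := by
                rw [show (2:ℕ) - 1 = 1 from rfl, mul_one, ← pow_mul]
                congr 1
                omega
        · calc 2 ^ n ≤ 2 ^ (2 * (n - 1) + 1) := Nat.pow_le_pow_right (by norm_num) (by omega)
            _ = 2 * (2 ^ (n - 1) * (2 - 1)) ^ 2 := by
              rw [show (2:ℕ) - 1 = 1 from rfl, mul_one, ← pow_mul, ← pow_succ']
              congr 1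
              omega
      · have hp3 : 3 ≤ p := by have := hpp.two_le; omega
        have key : p ^ n ≤ (p ^ (n - 1) * (p - 1)) ^ 2 := by
          have h1 : p ≤ (p - 1) ^ 2 := by nlinarith [Nat.sub_add_cancel (by omega : 1 ≤ p)]
          calc p ^ n = p ^ (n - 1) * p := by rw [← pow_succ]; congr 1; omega
            _ ≤ (p ^ (n - 1)) ^ 2 * (p - 1) ^ 2 := by
                exact Nat.mul_le_mul (Nat.le_self_pow (by norm_num) _) h1
            _ = (p ^ (n - 1) * (p - 1)) ^ 2 := (mul_pow _ _ _).symm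
        exact ⟨fun _ => key, key.trans (Nat.le_mul_of_pos_left _ (by norm_num))⟩
  | zero => simp
  | one => simp
  | coprime a b ha hb hab iha ihb =>
      have hφ : (a * b).totient = a.totient * b.totient := Nat.totient_mul hab
      rw [hφ]
      have hodd : ¬ 2 ∣ a ∨ ¬ 2 ∣ b := by
        by_contra h
        push_neg at h
        have := Nat.Coprime.eq_one_of_dvd (Nat.Coprime.coprime_dvd_left h.1 hab) h.2
        omega
      constructor
      · rintro (hoab | h4)
        · have hna : ¬ 2 ∣ a := fun h => hoab (h.mul_right b)
          have hnb : ¬ 2 ∣ b := fun h => hoab (h.mul_left a)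
          calc a * b ≤ a.totient ^ 2 * b.totient ^ 2 :=
                Nat.mul_le_mul (iha.1 (Or.inl hna)) (ihb.1 (Or.inl hnb))
            _ = (a.totient * b.totient) ^ 2 := (mul_pow _ _ _).symm
        · have h4ab : 4 ∣ a ∨ 4 ∣ b := by
            by_cases h2a : 2 ∣ a
            · left
              have hnb : ¬ 2 ∣ b := by
                rcases hodd with h | h
                · exact absurd h2a h
                · exact h
              have c2 : Nat.Coprime 2 b := (Nat.Prime.coprime_iff_not_dvd Nat.prime_two).mpr hnb
              have c4 : Nat.Coprime 4 b := by
                have := Nat.Coprime.pow_left 2 c2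
                norm_num at this
                exact this
              exact (Nat.Coprime.dvd_of_dvd_mul_right c4 h4)
            · right
              have c2 : Nat.Coprime 2 a := (Nat.Prime.coprime_iff_not_dvd Nat.prime_two).mpr h2a
              have c4 : Nat.Coprime 4 a := by
                have := Nat.Coprime.pow_left 2 c2
                norm_num at this
                exact this
              exact (Nat.Coprime.dvd_of_dvd_mul_left c4 h4)
          have key : a ≤ a.totient ^ 2 ∧ b ≤ b.totient ^ 2 := by
            rcases h4ab with h4a | h4b
            · have hnb : ¬ 2 ∣ b := by
                rcases hodd with h | h
                · exact absurd (dvd_trans (by norm_num) h4a) h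
                · exact h
              exact ⟨iha.1 (Or.inr h4a), ihb.1 (Or.inl hnb)⟩
            · have hna : ¬ 2 ∣ a := by
                rcases hodd with h | h
                · exact h
                · exact absurd (dvd_trans (by norm_num) h4b) h
              exact ⟨iha.1 (Or.inl hna), ihb.1 (Or.inr h4b)⟩
          calc a * b ≤ a.totient ^ 2 * b.totient ^ 2 := Nat.mul_le_mul key.1 key.2
            _ = (a.totient * b.totient) ^ 2 := (mul_pow _ _ _).symm
      · rcases hodd with h | h
        · calc a * b ≤ a.totient ^ 2 * (2 * b.totient ^ 2) :=
                Nat.mul_le_mul (iha.1 (Or.inl h)) ihb.2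
            _ = 2 * (a.totient * b.totient) ^ 2 := by ring
        · calc a * b ≤ 2 * a.totient ^ 2 * b.totient ^ 2 :=
                Nat.mul_le_mul iha.2 (ihb.1 (Or.inl h))
            _ = 2 * (a.totient * b.totient) ^ 2 := by ring

open Polynomial in
lemma aux_charpoly_eval {n : Type*} [Fintype n] [DecidableEq n] {R : Type*} [CommRing R]
    (M : Matrix n n R) (μ : R) :
    M.charpoly.eval μ = (Matrix.scalar n μ - M).det := by
  rw [Matrix.charpoly, _root_.eval_det, Matrix.matPolyEquiv_charmatrix]
  simp

open Polynomial in
lemma aux_order (s : ℕ) (p : Polynomial ℤ) (hmonic : p.Monic) (hdeg : p.natDegree = s)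
    (μ : ℂ) (hroot : (p.map (Int.castRingHom ℂ)).IsRoot μ)
    (k : ℕ) (hk : 0 < k) (hμk : μ ^ k = 1) :
    μ ^ (2 * s ^ 2).factorial = 1 := by
  have hfin : IsOfFinOrder μ := isOfFinOrder_iff_pow_eq_one.mpr ⟨k, hk, hμk⟩
  set m := orderOf μ with hm
  have hmpos : 0 < m := hfin.orderOf_pos
  have hprim : IsPrimitiveRoot μ m := IsPrimitiveRoot.orderOf μ
  have hcyc : cyclotomic m ℚ = minpoly ℚ μ := cyclotomic_eq_minpoly_rat hprim hmpos
  have hcomp : (algebraMap ℚ ℂ).comp (Int.castRingHom ℚ) = Int.castRingHom ℂ :=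
    Subsingleton.elim _ _
  have haev : (Polynomial.aeval μ) (p.map (Int.castRingHom ℚ)) = 0 := by
    rw [Polynomial.aeval_def, ← Polynomial.eval_map, Polynomial.map_map, hcomp]
    exact hroot
  have hdvd : minpoly ℚ μ ∣ p.map (Int.castRingHom ℚ) := minpoly.dvd ℚ μ haev
  have hne : p.map (Int.castRingHom ℚ) ≠ 0 := (hmonic.map _).ne_zero
  have htot : m.totient ≤ s := by
    have h1 := Polynomial.natDegree_le_of_dvd hdvd hne
    rw [← hcyc, natDegree_cyclotomic, hmonic.natDegree_map, hdeg] at h1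
    exact h1
  have hmle : m ≤ 2 * s ^ 2 := by
    have h2 := (aux_totient m).2
    have h3 : m.totient ^ 2 ≤ s ^ 2 := Nat.pow_le_pow_left htot 2
    omega
  have hdvdfact : m ∣ (2 * s ^ 2).factorial := Nat.dvd_factorial hmpos hmle
  exact orderOf_dvd_iff_pow_eq_one.mp hdvdfact


open Matrix Polynomial

theorem stmt_16 {G : Type*} [Group G] (s : ℕ) (hs : 1 ≤ s)
    (ρ : G → Matrix (Fin 2) (Fin 2) ℂ)
    (hρ1 : ρ 1 = 1) (hρmul : ∀ g h, ρ (g * h) = ρ g * ρ h)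
    (hT2 : ∀ g, ρ g 1 0 = 0 ∧ ρ g 1 1 = 1 ∧ ρ g 0 0 ≠ 0)
    (N K : Subgroup G) (hKN : K ≤ N) [N.Normal] [K.Normal]
    (π : G → (Fin s → ℤ))
    (hπadd : ∀ h₁ ∈ N, ∀ h₂ ∈ N, π (h₁ * h₂) = π h₁ + π h₂)
    (hπsurj : ∀ x : Fin s → ℤ, ∃ h ∈ N, π h = x)
    (hπker : ∀ h ∈ N, (π h = 0 ↔ h ∈ K))
    (A : G → Matrix (Fin s) (Fin s) ℤ)
    (hA : ∀ g : G, ∀ h ∈ N, π (g * h * g⁻¹) = (A g).mulVec (π h))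
    (hAunit : ∀ g, IsUnit (A g))
    (hunip : ∀ h ∈ N, ρ h 0 0 = 1)
    (hKtriv : ∀ h ∈ K, ρ h = 1)
    (hnt : ∃ h ∈ N, ρ h ≠ 1) :
    (∀ g : G, (((A g).charpoly).map (Int.castRingHom ℂ)).IsRoot (ρ g 0 0)) ∧
    ((∀ (g : G) (μ : ℂ), (((A g).charpoly).map (Int.castRingHom ℂ)).IsRoot μ →
        ∃ k : ℕ, 0 < k ∧ μ ^ k = 1) →
      ∃ k : ℕ, 0 < k ∧ ∀ g : G, (ρ g 0 0) ^ k = 1) := by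
  classical
  -- entry multiplication formulas
  have hmul00 : ∀ g h : G, ρ (g * h) 0 0 = ρ g 0 0 * ρ h 0 0 := by
    intro g h
    rw [hρmul, Matrix.mul_apply, Fin.sum_univ_two, (hT2 h).1, mul_zero, add_zero]
  have hmul01 : ∀ g h : G, ρ (g * h) 0 1 = ρ g 0 0 * ρ h 0 1 + ρ g 0 1 := by
    intro g h
    rw [hρmul, Matrix.mul_apply, Fin.sum_univ_two, (hT2 h).2.1, mul_one]
  have hone01 : (1 : Matrix (Fin 2) (Fin 2) ℂ) 0 1 = 0 := by
    simp [Matrix.one_apply]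
  have hbinv : ∀ g : G, ρ g 0 0 * ρ g⁻¹ 0 1 + ρ g 0 1 = 0 := by
    intro g
    have h := hmul01 g g⁻¹
    rw [mul_inv_cancel, hρ1, hone01] at h
    exact h.symm
  -- additivity of the (0,1) entry on N
  have hbadd : ∀ h₁ ∈ N, ∀ h₂ ∈ N, ρ (h₁ * h₂) 0 1 = ρ h₁ 0 1 + ρ h₂ 0 1 := by
    intro h₁ h₁N h₂ _
    rw [hmul01, hunip h₁ h₁N, one_mul, add_comm]
  -- conjugation formula
  have hconj : ∀ g : G, ∀ h ∈ N, ρ (g * h * g⁻¹) 0 1 = ρ g 0 0 * ρ h 0 1 := by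
    intro g h hN
    rw [hmul01 (g * h) g⁻¹, hmul00 g h, hmul01 g h, hunip h hN]
    linear_combination hbinv g
  -- π basics
  have hπ1 : π 1 = 0 := by
    have h := hπadd 1 N.one_mem 1 N.one_mem
    rw [one_mul] at h
    exact (left_eq_add.mp h)
  have hπinv : ∀ h ∈ N, π h⁻¹ = -π h := by
    intro h hN
    have h2 := hπadd h hN h⁻¹ (N.inv_mem hN)
    rw [mul_inv_cancel, hπ1] at h2
    exact eq_neg_of_add_eq_zero_right h2.symm
  -- the (0,1) entry only depends on π on N
  have hwd : ∀ h₁ ∈ N, ∀ h₂ ∈ N, π h₁ = π h₂ → ρ h₁ 0 1 = ρ h₂ 0 1 := by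
    intro h₁ h₁N h₂ h₂N heq
    have hmem : h₁ * h₂⁻¹ ∈ N := N.mul_mem h₁N (N.inv_mem h₂N)
    have hz : π (h₁ * h₂⁻¹) = 0 := by
      rw [hπadd h₁ h₁N h₂⁻¹ (N.inv_mem h₂N), hπinv h₂ h₂N, heq, add_neg_cancel]
    have hK : h₁ * h₂⁻¹ ∈ K := (hπker _ hmem).1 hz
    have hρK : ρ (h₁ * h₂⁻¹) = 1 := hKtriv _ hK
    have h3 : ρ ((h₁ * h₂⁻¹) * h₂) 0 1 = ρ (h₁ * h₂⁻¹) 0 1 + ρ h₂ 0 1 :=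
      hbadd _ hmem _ h₂N
    rw [inv_mul_cancel_right, hρK, hone01, zero_add] at h3
    exact h3
  -- choose sections
  choose e heN heπ using hπsurj
  set F : (Fin s → ℤ) → ℂ := fun x => ρ (e x) 0 1 with hF
  have hFb : ∀ h ∈ N, ρ h 0 1 = F (π h) := by
    intro h hN
    exact hwd h hN (e (π h)) (heN _) (heπ (π h)).symm
  have hFadd : ∀ x y, F (x + y) = F x + F y := by
    intro x y
    have hm : e x * e y ∈ N := N.mul_mem (heN _) (heN _)
    have hπm : π (e x * e y) = x + y := by
      rw [hπadd _ (heN _) _ (heN _), heπ, heπ]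
    calc F (x + y) = F (π (e x * e y)) := by rw [hπm]
      _ = ρ (e x * e y) 0 1 := (hFb _ hm).symm
      _ = F x + F y := hbadd _ (heN _) _ (heN _)
  let Fh : (Fin s → ℤ) →+ ℂ := AddMonoidHom.mk' F hFadd
  set w : Fin s → ℂ := fun i => F (Pi.single i 1) with hwdef
  have hFsum : ∀ x : Fin s → ℤ, F x = ∑ i, (x i : ℂ) * w i := by
    intro x
    have h1 : F x = Fh (∑ i, Pi.single i (x i)) := by
      rw [Finset.univ_sum_single]
      rfl
    rw [h1, map_sum]
    refine Finset.sum_congr rfl fun i _ => ?_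
    have h2 : (Pi.single i (x i) : Fin s → ℤ) = (x i) • (Pi.single i 1 : Fin s → ℤ) := by
      ext j
      by_cases hj : j = i
      · subst hj; simp
      · simp [Pi.single_apply, hj]
    rw [h2, map_zsmul]
    rw [zsmul_eq_mul]
    rfl
  -- eigenvector equation
  have heig : ∀ g : G, ∀ j : Fin s, ∑ i, (A g i j : ℂ) * w i = ρ g 0 0 * w j := by
    intro g j
    set h := e ((Pi.single j 1 : Fin s → ℤ)) with hh
    have hhN : h ∈ N := heN _
    have hconjN : g * h * g⁻¹ ∈ N := ‹N.Normal›.conj_mem h hhN g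
    have hπc : π (g * h * g⁻¹) = fun i => (A g i j : ℤ) := by
      rw [hA g h hhN, heπ]
      funext i
      simp [Matrix.mulVec, dotProduct, Pi.single_apply, mul_ite]
    have lhs : ρ (g * h * g⁻¹) 0 1 = ∑ i, (A g i j : ℂ) * w i := by
      rw [hFb _ hconjN, hπc, hFsum]
    have rhs : ρ (g * h * g⁻¹) 0 1 = ρ g 0 0 * w j := by
      rw [hconj g h hhN, hFb h hhN, heπ]
    rw [← lhs, rhs]
  -- w ≠ 0
  have hwne : w ≠ 0 := by
    obtain ⟨h0, hh0N, hh0⟩ := hnt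
    intro hw0
    apply hh0
    have hb0 : ρ h0 0 1 = 0 := by
      rw [hFb h0 hh0N, hFsum]
      apply Finset.sum_eq_zero
      intro i _
      rw [show w i = 0 from congrFun hw0 i, mul_zero]
    ext i j
    fin_cases i <;> fin_cases j
    · simpa [Matrix.one_apply] using hunip h0 hh0N
    · simpa [Matrix.one_apply] using hb0
    · simpa [Matrix.one_apply] using (hT2 h0).1
    · simpa [Matrix.one_apply] using (hT2 h0).2.1
  -- part 1
  have part1 : ∀ g : G, (((A g).charpoly).map (Int.castRingHom ℂ)).IsRoot (ρ g 0 0) := by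
    intro g
    rw [← Matrix.charpoly_map]
    show (((A g).map (Int.castRingHom ℂ)).charpoly).eval (ρ g 0 0) = 0
    rw [aux_charpoly_eval]
    rw [← Matrix.exists_vecMul_eq_zero_iff]
    refine ⟨w, hwne, ?_⟩
    set μ := ρ g 0 0 with hμ
    set B := Matrix.scalar (Fin s) μ - (A g).map (Int.castRingHom ℂ) with hB
    funext j
    show (w ᵥ* B) j = (0 : ℂ)
    have hBij : ∀ i, B i j = (if i = j then μ else 0) - (A g i j : ℂ) := by
      intro i
      simp [hB, Matrix.sub_apply, Matrix.scalar_apply, Matrix.diagonal_apply,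
        Matrix.map_apply]
    have expand : (w ᵥ* B) j = ∑ i, w i * B i j := rfl
    calc (w ᵥ* B) j = ∑ i, w i * ((if i = j then μ else 0) - (A g i j : ℂ)) := by
          rw [expand]; exact Finset.sum_congr rfl fun i _ => by rw [hBij]
      _ = (∑ i, w i * (if i = j then μ else 0)) - ∑ i, w i * (A g i j : ℂ) := by
          rw [← Finset.sum_sub_distrib]
          exact Finset.sum_congr rfl fun i _ => mul_sub _ _ _
      _ = μ * w j - ∑ i, (A g i j : ℂ) * w i := by
          congr 1
          · simp only [mul_ite, mul_zero]
            rw [Finset.sum_ite_eq' Finset.univ j (fun i => w i * μ)]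
            simp [mul_comm]
          · exact Finset.sum_congr rfl fun i _ => mul_comm _ _
      _ = 0 := by rw [heig g j]; ring
  refine ⟨part1, ?_⟩
  intro H
  refine ⟨(2 * s ^ 2).factorial, Nat.factorial_pos _, fun g => ?_⟩
  obtain ⟨k, hk, hμk⟩ := H g (ρ g 0 0) (part1 g)
  exact aux_order s ((A g).charpoly) ((A g).charpoly_monic) (by
      rw [Matrix.charpoly_natDegree_eq_dim, Fintype.card_fin]) (ρ g 0 0) (part1 g) k hk hμk
end

section
/- Let ρ : G → T_n(ℂ) be a representation into invertible upper triangular matrices of a finitely generated group G. Suppose there exists a holomorphic family f : 𝔻 → Hom(G, GL_n(ℂ)) with f(y) = ρ for some y ∈ 𝔻, y ≠ 0, and f(0) = ρ₀. Then with A(z) = diag[1, z, ..., z^{n-1}] and a = (1/|y|)^{1/(n-1)} > 1, the family f₁(z) := A(z)⁻¹ f(y z^{n-1}) A(z) is holomorphic on the disk {|z| < a} (each entry extends holomorphically across z = 0), satisfies f₁(1) = ρ conjugated appropriately equal to f(y) = ρ, and f₁(z) ∈ Hom(G, GL_n(ℂ)) for all |z| < a. -/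
open Filter Metric

private lemma aux_dslope {φ : ℂ → ℂ} (h : AnalyticOnNhd ℂ φ (ball (0:ℂ) 1)) :
    AnalyticOnNhd ℂ (dslope φ 0) (ball (0:ℂ) 1) := by
  intro w hw
  rcases eq_or_ne w 0 with rfl | hw0
  · obtain ⟨p, hp⟩ := h 0 hw
    exact ⟨_, hp.has_fpower_series_dslope_fslope⟩
  · have h1 : AnalyticAt ℂ (fun z => (φ z - φ 0) / z) w :=
      ((h w hw).sub analyticAt_const).div analyticAt_id hw0
    apply h1.congr
    filter_upwards [isOpen_compl_singleton.mem_nhds hw0] with z hz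
    rw [dslope_of_ne _ hz, slope_def_field, sub_zero]

private lemma aux_eq {φ : ℂ → ℂ} (h0 : φ 0 = 0) (w : ℂ) : φ w = w * dslope φ 0 w := by
  rcases eq_or_ne w 0 with rfl | hw
  · simp [h0]
  · rw [dslope_of_ne _ hw, slope_def_field, h0, sub_zero, sub_zero]
    field_simp

private lemma aux_zero {u : ℂ → ℂ} (hc : ContinuousAt u 0)
    (h : ∀ᶠ z in nhdsWithin 0 {(0:ℂ)}ᶜ, u z = 0) : u 0 = 0 :=
  tendsto_nhds_unique (hc.continuousWithinAt.tendsto)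
    (Filter.Tendsto.congr' (Filter.EventuallyEq.symm h) tendsto_const_nhds)

/-- given a holomorphic family `f : 𝔻 → Hom(G, GL_n(ℂ))` with
`f 0` upper triangular, and `y ≠ 0`, the reparametrized conjugated family
`f₁(z) = A(z)⁻¹ f(y z^(n-1)) A(z)` extends holomorphically to the disk of
radius `a = (1/|y|)^(1/(n-1)) > 1`, agrees with the conjugation formula for
`z ≠ 0`, satisfies `f₁(1) = f(y)`, and consists of homomorphisms into
`GL_n(ℂ)` throughout. -/
theorem stmt_17 {G : Type*} [Group G] (n : ℕ) (hn : 2 ≤ n)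
    (f : ℂ → G → Matrix (Fin n) (Fin n) ℂ)
    (hhol : ∀ g i j, AnalyticOnNhd ℂ (fun z => f z g i j) (Metric.ball 0 1))
    (hhom1 : ∀ z ∈ Metric.ball (0 : ℂ) 1, f z 1 = 1)
    (hhommul : ∀ z ∈ Metric.ball (0 : ℂ) 1, ∀ g h, f z (g * h) = f z g * f z h)
    (hunit : ∀ z ∈ Metric.ball (0 : ℂ) 1, ∀ g, IsUnit (f z g))
    (y : ℂ) (hy0 : y ≠ 0) (hy1 : ‖y‖ < 1)
    (htri : ∀ g, (f 0 g).BlockTriangular id) :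
    let a : ℝ := (1 / ‖y‖) ^ ((1 : ℝ) / ((n : ℝ) - 1))
    let A : ℂ → Matrix (Fin n) (Fin n) ℂ :=
      fun z => Matrix.diagonal fun i => z ^ (i : ℕ)
    1 < a ∧
    ∃ F : ℂ → G → Matrix (Fin n) (Fin n) ℂ,
      (∀ g i j, AnalyticOnNhd ℂ (fun z => F z g i j) (Metric.ball 0 a)) ∧
      (∀ z ∈ Metric.ball (0 : ℂ) a, z ≠ 0 →
        ∀ g, F z g = (A z)⁻¹ * f (y * z ^ (n - 1)) g * A z) ∧
      F 1 = f y ∧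
      (∀ z ∈ Metric.ball (0 : ℂ) a, F z 1 = 1 ∧
        (∀ g h, F z (g * h) = F z g * F z h) ∧ ∀ g, IsUnit (F z g)) := by
  intro a A
  have hya : 0 < ‖y‖ := norm_pos_iff.mpr hy0
  have hn1 : (1:ℝ) ≤ (n:ℝ) - 1 := by
    have : (2:ℝ) ≤ (n:ℝ) := by exact_mod_cast hn
    linarith
  have ha1 : 1 < a := by
    rw [Real.one_lt_rpow_iff_of_pos (by positivity)]
    left
    constructor
    · rw [lt_div_iff₀ hya, one_mul]; exact hy1
    · positivity
  have hnn : n - 1 ≠ 0 := by omega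
  have hapow : a ^ (n-1 : ℕ) = 1 / ‖y‖ := by
    show ((1 / ‖y‖) ^ ((1 : ℝ) / ((n : ℝ) - 1))) ^ (n-1:ℕ) = _
    rw [← Real.rpow_natCast (_ ^ _) (n-1), ← Real.rpow_mul (by positivity)]
    rw [Nat.cast_sub (by omega), Nat.cast_one, one_div_mul_cancel (by linarith), Real.rpow_one]
  have hmaps : ∀ z : ℂ, z ∈ ball (0:ℂ) a → y * z ^ (n-1) ∈ ball (0:ℂ) 1 := by
    intro z hz
    rw [mem_ball, dist_zero_right] at hz ⊢
    rw [norm_mul, norm_pow]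
    have hz' : ‖z‖ ^ (n-1) < a ^ (n-1) :=
      pow_lt_pow_left₀ hz (norm_nonneg z) hnn
    calc ‖y‖ * ‖z‖ ^ (n-1) < ‖y‖ * a ^ (n-1) := by
          exact mul_lt_mul_of_pos_left hz' (by simpa using hya)
      _ = 1 := by
          rw [hapow]; field_simp
  refine ⟨ha1, ?_⟩
  set ψ : G → Fin n → Fin n → ℂ → ℂ := fun g i j => dslope (fun w => f w g i j) 0 with hψ
  set F : ℂ → G → Matrix (Fin n) (Fin n) ℂ := fun z g => Matrix.of fun i j =>
    if (j:ℕ) < (i:ℕ) then y * z ^ (n-1-((i:ℕ)-(j:ℕ))) * ψ g i j (y * z ^ (n-1))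
    else z ^ ((j:ℕ)-(i:ℕ)) * f (y * z ^ (n-1)) g i j with hF
  have hψa : ∀ g i j, AnalyticOnNhd ℂ (ψ g i j) (ball (0:ℂ) 1) :=
    fun g i j => aux_dslope (hhol g i j)
  have hfac : ∀ (g : G) (i j : Fin n), (j:ℕ) < (i:ℕ) →
      ∀ w : ℂ, f w g i j = w * ψ g i j w := by
    intro g i j hij w
    exact aux_eq (φ := fun w => f w g i j) (htri g (show (id j : Fin n) < id i from Fin.lt_def.mpr hij)) w
  -- analyticity
  have hmapA : AnalyticOnNhd ℂ (fun z : ℂ => y * z ^ (n-1)) (ball (0:ℂ) a) :=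
    fun z _ => analyticAt_const.mul (analyticAt_id.pow _)
  have hFhol : ∀ g i j, AnalyticOnNhd ℂ (fun z => F z g i j) (ball 0 a) := by
    intro g i j
    by_cases h : (j:ℕ) < (i:ℕ)
    · simp only [hF, Matrix.of_apply, if_pos h]
      exact (analyticOnNhd_const.mul (analyticOnNhd_id.pow _)).mul
        (((hψa g i j).comp hmapA) hmaps)
    · simp only [hF, Matrix.of_apply, if_neg h]
      exact (analyticOnNhd_id.pow _).mul (((hhol g i j).comp hmapA) hmaps)
  
  -- inverse of A z
  have hdiag : ∀ z : ℂ, z ≠ 0 → Matrix.diagonal (fun i : Fin n => (z ^ (i:ℕ))⁻¹) * A z = 1 := by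
    intro z hz0
    show Matrix.diagonal _ * Matrix.diagonal _ = 1
    rw [Matrix.diagonal_mul_diagonal,
      show (fun i : Fin n => (z^(i:ℕ))⁻¹ * z^(i:ℕ)) = fun _ => 1 from
        funext fun i => inv_mul_cancel₀ (pow_ne_zero _ hz0), Matrix.diagonal_one]
  have hAinv : ∀ z : ℂ, z ≠ 0 → (A z)⁻¹ = Matrix.diagonal fun i : Fin n => (z ^ (i:ℕ))⁻¹ :=
    fun z hz0 => Matrix.inv_eq_left_inv (hdiag z hz0)
  have hAl : ∀ z : ℂ, z ≠ 0 → (A z)⁻¹ * A z = 1 := fun z hz0 => by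
    rw [hAinv z hz0]; exact hdiag z hz0
  have hAr : ∀ z : ℂ, z ≠ 0 → A z * (A z)⁻¹ = 1 :=
    fun z hz0 => mul_eq_one_comm.mp (hAl z hz0)
  -- the conjugation formula
  have hformula : ∀ z ∈ ball (0:ℂ) a, z ≠ 0 →
      ∀ g, F z g = (A z)⁻¹ * f (y * z ^ (n-1)) g * A z := by
    intro z hz hz0 g
    rw [hAinv z hz0]
    ext i j
    rw [Matrix.mul_diagonal, Matrix.diagonal_mul]
    simp only [hF, Matrix.of_apply]
    by_cases h : (j:ℕ) < (i:ℕ)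
    · rw [if_pos h, hfac g i j h]
      have key : z^(n-1-((i:ℕ)-(j:ℕ))) * z^(i:ℕ) = z^(n-1) * z^(j:ℕ) := by
        rw [← pow_add, ← pow_add]; congr 1
        have := i.isLt; omega
      field_simp
      linear_combination (ψ g i j (y * z^(n-1))) * key
    · rw [if_neg h]
      have key : z^((j:ℕ)-(i:ℕ)) * z^(i:ℕ) = z^(j:ℕ) := by
        rw [← pow_add]; congr 1; omega
      field_simp
      linear_combination (f (y * z^(n-1)) g i j) * key
  have h1ball : (1:ℂ) ∈ ball (0:ℂ) a := by
    rw [mem_ball, dist_zero_right]; simpa using ha1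
  have hF1 : F 1 = f y := by
    funext g
    rw [hformula 1 h1ball one_ne_zero g]
    have hA1 : A 1 = 1 := by
      show Matrix.diagonal _ = 1
      simp
    rw [hA1, inv_one, Matrix.one_mul, Matrix.mul_one, one_pow, mul_one]
  -- homomorphism properties away from 0
  have hone_ne : ∀ z ∈ ball (0:ℂ) a, z ≠ 0 → F z 1 = 1 := by
    intro z hz hz0
    rw [hformula z hz hz0, hhom1 _ (hmaps z hz), Matrix.mul_one, hAl z hz0]
  have hmul_ne : ∀ z ∈ ball (0:ℂ) a, z ≠ 0 → ∀ g h, F z (g*h) = F z g * F z h := by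
    intro z hz hz0 g h
    rw [hformula z hz hz0, hformula z hz hz0, hformula z hz hz0,
      hhommul _ (hmaps z hz) g h]
    calc (A z)⁻¹ * (f (y*z^(n-1)) g * f (y*z^(n-1)) h) * A z
        = (A z)⁻¹ * f (y*z^(n-1)) g * (A z * (A z)⁻¹) * f (y*z^(n-1)) h * A z := by
          rw [hAr z hz0]; noncomm_ring
      _ = ((A z)⁻¹ * f (y*z^(n-1)) g * A z) * ((A z)⁻¹ * f (y*z^(n-1)) h * A z) := by
          noncomm_ring
  -- continuity at 0
  have ha0 : (0:ℝ) < a := by linarith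
  have hcontF : ∀ g i j, ContinuousAt (fun z => F z g i j) 0 :=
    fun g i j => ((hFhol g i j) 0 (mem_ball_self ha0)).continuousAt
  have hball0 : ball (0:ℂ) a ∈ nhds (0:ℂ) := isOpen_ball.mem_nhds (mem_ball_self ha0)
  have hpunct : ∀ᶠ z in nhdsWithin (0:ℂ) {(0:ℂ)}ᶜ, z ∈ ball (0:ℂ) a ∧ z ≠ 0 := by
    filter_upwards [mem_nhdsWithin_of_mem_nhds hball0, self_mem_nhdsWithin] with z h1 h2
    exact ⟨h1, h2⟩
  have hmul_all : ∀ z ∈ ball (0:ℂ) a, ∀ g h, F z (g*h) = F z g * F z h := by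
    intro z hz g h
    rcases eq_or_ne z 0 with rfl | hz0
    · ext i j
      rw [← sub_eq_zero]
      have hc : ContinuousAt (fun z => F z (g*h) i j - (F z g * F z h) i j) 0 := by
        apply (hcontF (g*h) i j).sub
        simp only [Matrix.mul_apply]
        exact tendsto_finset_sum _ fun k _ => ((hcontF g i k).mul (hcontF h k j))
      exact aux_zero hc (by
        filter_upwards [hpunct] with w hw
        rw [hmul_ne w hw.1 hw.2 g h, sub_self])
    · exact hmul_ne z hz hz0 g h
  have hone_all : ∀ z ∈ ball (0:ℂ) a, F z 1 = 1 := by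
    intro z hz
    rcases eq_or_ne z 0 with rfl | hz0
    · ext i j
      rw [← sub_eq_zero]
      have hc : ContinuousAt (fun z => F z 1 i j - (1 : Matrix (Fin n) (Fin n) ℂ) i j) 0 :=
        (hcontF 1 i j).sub continuousAt_const
      exact aux_zero hc (by
        filter_upwards [hpunct] with w hw
        rw [hone_ne w hw.1 hw.2, sub_self])
    · exact hone_ne z hz hz0
  have hunit_all : ∀ z ∈ ball (0:ℂ) a, ∀ g, IsUnit (F z g) := by
    intro z hz g
    apply (Matrix.isUnit_iff_isUnit_det _).mpr; apply Matrix.isUnit_det_of_right_inverse (B := F z g⁻¹)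
    rw [← hmul_all z hz g g⁻¹, mul_inv_cancel, hone_all z hz]
  exact ⟨F, hFhol, hformula, hF1, fun z hz => ⟨hone_all z hz, hmul_all z hz, hunit_all z hz⟩⟩
end
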